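/- Let F(E) := max(0, min(1, (1−E)/2)) (the OFTRL response function of the squared Euclidean norm regularizer), let L := 1/2 (a Lipschitz constant of F), and let c1 := 1/2 − F(1/(20L)) = 1/20. Then, with c3 := 1/2, there exist constants δ', c2 > 0 such that for every 0 < δ ≤ δ' and every E ∈ ℝ: (1) if F(E) ≥ 1/(1+δ) then F(E − c1²/(30Lδ)) ≥ (1+c3)/(1+c3+δ); and (2) if F(E) ≥ 1/(2(1+δ)) then F(E − c3·c1²/(120L) + δ/(4L)) ≥ 1/2 + c2. -/
import Mathlib


open Set

/-- The OFTRL response function of the squared Euclidean norm regularizer: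
`F(E) = max(0, min(1, (1−E)/2))`. -/
noncomputable def Feuc (E : ℝ) : ℝ := max 0 (min 1 ((1 - E) / 2))

/-- The Lipschitz constant `L = 1/2` of `Feuc`. -/
noncomputable def Leuc : ℝ := 1 / 2

/-- `c1 = 1/2 − F(1/(20L))`. -/
noncomputable def c1euc : ℝ := 1 / 2 - Feuc (1 / (20 * Leuc))

/-- `c3 = 1/2`. -/
noncomputable def c3euc : ℝ := 1 / 2

lemma Feuc_lower {E T : ℝ} (hT1 : T ≤ 1) (hT2 : T ≤ (1 - E) / 2) : T ≤ Feuc E :=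
  le_trans (le_min hT1 hT2) (le_max_right _ _)

lemma Feuc_upper {E T : ℝ} (hT : 0 < T) (h : T ≤ Feuc E) : T ≤ (1 - E) / 2 := by
  unfold Feuc at h
  rcases le_total (min 1 ((1 - E) / 2)) 0 with h0 | h0
  · rw [max_eq_left h0] at h; linarith
  · rw [max_eq_right h0] at h; exact le_trans h (min_le_right _ _)

lemma c1euc_eq : c1euc = 1 / 20 := by
  unfold c1euc Feuc Leuc; norm_num

lemma Feuc_lip (a b : ℝ) : |Feuc a - Feuc b| ≤ Leuc * |a - b| := by
  unfold Feuc Leuc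
  have h1 : |max 0 (min 1 ((1 - a) / 2)) - max 0 (min 1 ((1 - b) / 2))|
      ≤ |min 1 ((1 - a) / 2) - min 1 ((1 - b) / 2)| := by
    rw [max_comm 0 (min 1 ((1 - a) / 2)), max_comm 0 (min 1 ((1 - b) / 2))]
    exact abs_max_sub_max_le_abs _ _ _
  have h2 : |min 1 ((1 - a) / 2) - min 1 ((1 - b) / 2)| ≤ |(1 - a) / 2 - (1 - b) / 2| := by
    have := abs_min_sub_min_le_max 1 ((1 - a) / 2) 1 ((1 - b) / 2)
    simpa using this
  have h3 : |(1 - a) / 2 - (1 - b) / 2| = 1 / 2 * |a - b| := by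
    rw [show (1 - a) / 2 - (1 - b) / 2 = -((a - b) / 2) by ring, abs_neg, abs_div]
    rw [abs_of_nonneg (by norm_num : (0:ℝ) ≤ 2)]; ring
  linarith

/-- the main assumption holds for the squared Euclidean norm regularizer:
`L = 1/2` is a Lipschitz constant of `F`, `c1 = 1/20`, and with `c3 = 1/2` there are
`δ', c2 > 0` making items (1) and (2) hold. -/
theorem euclid_main_assumption :
    (∀ a b : ℝ, |Feuc a - Feuc b| ≤ Leuc * |a - b|) ∧
    c1euc = 1 / 20 ∧
    ∃ δ' c2 : ℝ, 0 < δ' ∧ 0 < c2 ∧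
      ∀ δ : ℝ, 0 < δ → δ ≤ δ' → ∀ E : ℝ,
        (1 / (1 + δ) ≤ Feuc E →
          (1 + c3euc) / (1 + c3euc + δ) ≤ Feuc (E - c1euc ^ 2 / (30 * Leuc * δ))) ∧
        (1 / (2 * (1 + δ)) ≤ Feuc E →
          1 / 2 + c2 ≤ Feuc (E - c3euc * c1euc ^ 2 / (120 * Leuc) + δ / (4 * Leuc))) := by
  refine ⟨Feuc_lip, c1euc_eq, 1 / 1000000, 1 / 200000, by norm_num, by norm_num, ?_⟩
  intro δ hδ hδ' E
  have hδ1 : (0:ℝ) < 1 + δ := by linarith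
  constructor
  · intro hE
    have hpos : (0:ℝ) < 1 / (1 + δ) := by positivity
    have hE' : 1 / (1 + δ) ≤ (1 - E) / 2 := Feuc_upper hpos hE
    rw [c1euc_eq]
    unfold c3euc Leuc
    have harg : E - (1 / 20 : ℝ) ^ 2 / (30 * (1 / 2) * δ) = E - 1 / (6000 * δ) := by
      field_simp; ring
    rw [harg]
    apply Feuc_lower
    · rw [div_le_one (by linarith)]; linarith
    · rw [div_le_div_iff₀ (by linarith) (by norm_num)]
      have h1 : 1 / (1 + δ) ≤ (1 - E) / 2 := hE'
      have h2 : (0:ℝ) < 6000 * δ := by linarith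
      have h3 : 1 - E ≥ 2 / (1 + δ) := by
        rw [ge_iff_le, div_le_iff₀ hδ1] at *; nlinarith [hE', hδ1]
      have key : (1 - (E - 1 / (6000 * δ))) = (1 - E) + 1 / (6000 * δ) := by ring
      rw [key]
      have h4 : (1:ℝ) / (6000 * δ) ≥ 1 / 6 := by
        rw [ge_iff_le, div_le_div_iff₀ (by norm_num) h2]; nlinarith
      have h5 : (1 - E) * (1 + δ) ≥ 2 := by
        rw [ge_iff_le, ← div_le_iff₀ hδ1]; linarith [h3]
      have h6 : 1 - E ≥ 2 - 2 * δ := by nlinarith [mul_pos hδ hδ]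
      nlinarith [mul_pos hδ hδ, h4, h6, hδ1]
  · intro hE
    have hpos : (0:ℝ) < 1 / (2 * (1 + δ)) := by positivity
    have hE' : 1 / (2 * (1 + δ)) ≤ (1 - E) / 2 := Feuc_upper hpos hE
    rw [c1euc_eq]
    unfold c3euc Leuc
    have harg : E - (1 / 2 : ℝ) * (1 / 20) ^ 2 / (120 * (1 / 2)) + δ / (4 * (1 / 2))
        = E - 1 / 48000 + δ / 2 := by norm_num
    rw [harg]
    apply Feuc_lower
    · norm_num
    · have h3 : 1 - E ≥ 1 / (1 + δ) := by
        rw [ge_iff_le, div_le_iff₀ hδ1]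
        have := hE'
        rw [div_le_div_iff₀ (by positivity) (by norm_num)] at this
        nlinarith
      have h4 : (1:ℝ) / (1 + δ) ≥ 1 - δ := by
        rw [ge_iff_le, le_div_iff₀ hδ1]; nlinarith
      nlinarith [h3, h4]
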